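/- arXiv:2205.06037 — 2 statements merged into one kernel-verified Lean document; each statement's English description precedes it below -/
import Mathlib

section
/- Let L be a real Lie algebra, H ⊆ L a Lie subalgebra, and h₁ ∈ H an element such that ⁅h₁, ⁅h₁, ⁅h₁, y⁆⁆⁆ = ⁅h₁, y⁆ for all y ∈ H. Let h₂ ∈ L satisfy ⁅h₂, y⁆ = −⁅h₁, y⁆ for all y ∈ H. If ⁅h₂, ⁅y, h₁⁆ − ⁅y, h₂⁆⁆ = 0 for all y ∈ H, then ⁅h₁, y⁆ = 0 for all y ∈ H, i.e., h₁ lies in the center of H. -/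
/-- Remark 3.2(b),(c): let `H` be a Lie subalgebra of a real Lie algebra `L`, `h₁ ∈ H` with
`(ad h₁)³ = ad h₁` on `H`, and `h₂ ∈ L` acting on `H` as `-ad h₁`. If
`⁅h₂, ⁅y, h₁⁆ - ⁅y, h₂⁆⁆ = 0` for all `y ∈ H` (the necessary condition for modular
covariance), then `h₁` is central in `H`. -/
theorem modular_covariance_forces_central
    (L : Type*) [LieRing L] [LieAlgebra ℝ L] (H : LieSubalgebra ℝ L)
    (h₁ h₂ : L) (hh₁ : h₁ ∈ H)
    (heuler : ∀ y ∈ H, ⁅h₁, ⁅h₁, ⁅h₁, y⁆⁆⁆ = ⁅h₁, y⁆)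
    (hneg : ∀ y ∈ H, ⁅h₂, y⁆ = -⁅h₁, y⁆)
    (hker : ∀ y ∈ H, ⁅h₂, ⁅y, h₁⁆ - ⁅y, h₂⁆⁆ = 0) :
    ∀ y ∈ H, ⁅h₁, y⁆ = 0 := by
  intro y hy
  have hby : ⁅h₁, y⁆ ∈ H := H.lie_mem hh₁ hy
  have key : ⁅h₂, ⁅h₁, y⁆⁆ = 0 := by
    have h := hker y hy
    have e : (⁅y, h₁⁆ - ⁅y, h₂⁆ : L) = (-2 : ℝ) • ⁅h₁, y⁆ := by
      have a : (⁅y, h₂⁆ : L) = ⁅h₁, y⁆ := by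
        rw [← lie_skew, hneg y hy, neg_neg]
      have b : (⁅y, h₁⁆ : L) = -⁅h₁, y⁆ := by rw [← lie_skew]
      rw [a, b]; module
    rw [e, lie_smul] at h
    have := congrArg (fun z => (-(2:ℝ))⁻¹ • z) h
    beta_reduce at this
    rwa [smul_smul, inv_mul_cancel₀ (by norm_num), one_smul, smul_zero] at this
  have h2 : ⁅h₁, ⁅h₁, y⁆⁆ = 0 := by
    have := hneg _ hby
    rw [key] at this
    exact neg_eq_zero.mp this.symm
  calc ⁅h₁, y⁆ = ⁅h₁, ⁅h₁, ⁅h₁, y⁆⁆⁆ := (heuler y hy).symm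
    _ = 0 := by rw [h2, lie_zero]
end

section
/- Let n ≥ 2 and let h = diag(a₁, …, a_n) ∈ M_n(ℝ) be diagonal with Σᵢ aᵢ = 0 and a₂ = a₁ + 1, and assume h + k₁ ≠ 0, where k₁ := (1/2)·diag(1, −1, 0, …, 0) and k₂ := (1/2)·(E₁₂ + E₂₁). Then the real linear span B of {h, k₁, k₂, ⁅k₁, k₂⁆} is a Lie subalgebra of sl_n(ℝ) of dimension 4, and B is isomorphic as a real Lie algebra to gl₂(ℝ), the Lie algebra of all real 2×2 matrices with commutator bracket. -/
attribute [local instance 100] LieRing.ofAssociativeRing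

open Matrix

section helpers
set_option linter.unusedSectionVars false
variable {m : Type*} [Fintype m] [DecidableEq m]

lemma diagMulStd (d : m → ℝ) (i j : m) (c : ℝ) :
    Matrix.diagonal d * Matrix.single i j c = Matrix.single i j (d i * c) := by
  ext a b
  rw [Matrix.diagonal_mul]
  rcases eq_or_ne i a with rfl | hia
  · rcases eq_or_ne j b with rfl | hjb
    · simp
    · simp [hjb]
  · simp [hia]

lemma stdMulDiag (d : m → ℝ) (i j : m) (c : ℝ) :
    Matrix.single i j c * Matrix.diagonal d = Matrix.single i j (c * d j) := by
  ext a b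
  rw [Matrix.mul_diagonal]
  rcases eq_or_ne i a with rfl | hia
  · rcases eq_or_ne j b with rfl | hjb
    · simp
    · simp [hjb]
  · simp [hia]

lemma stdSub (i j : m) (x y : ℝ) :
    Matrix.single i j x - Matrix.single i j y = Matrix.single i j (x - y) := by
  ext a b
  rcases eq_or_ne i a with rfl | hia
  · rcases eq_or_ne j b with rfl | hjb
    · simp
    · simp [hjb]
  · simp [hia]

lemma stdSmul (i j : m) (c : ℝ) :
    Matrix.single i j c = c • Matrix.single i j (1:ℝ) := by
  rw [Matrix.smul_single, smul_eq_mul, mul_one]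

lemma lieDiagStd (d : m → ℝ) (i j : m) (c : ℝ) :
    ⁅Matrix.diagonal d, Matrix.single i j c⁆ = Matrix.single i j ((d i - d j) * c) := by
  rw [Ring.lie_def, diagMulStd, stdMulDiag, stdSub]
  ring_nf

lemma stdDiagOff (i x y : m) (c : ℝ) (hxy : x ≠ y) :
    Matrix.single i i c x y = 0 := by
  rcases eq_or_ne i x with rfl | hx
  · exact Matrix.single_apply_of_col_ne _ _ hxy _
  · exact Matrix.single_apply_of_row_ne hx _ _ _

end helpers

set_option maxHeartbeats 2000000 in
/-- Lemma 2.12(b) in the explicit situation of Section 3.2.2: the span of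
`{h, k₁, k₂, ⁅k₁,k₂⁆}` is a 4-dimensional Lie subalgebra of `sl_n(ℝ)` isomorphic to
`gl₂(ℝ)`. -/
theorem span_is_gl2_subalgebra (n : ℕ) (hn : 2 ≤ n) (a : Fin n → ℝ)
    (hsum : ∑ i, a i = 0) (ha : a ⟨1, by omega⟩ = a ⟨0, by omega⟩ + 1) :
    let h : Matrix (Fin n) (Fin n) ℝ := Matrix.diagonal a
    let k₁ : Matrix (Fin n) (Fin n) ℝ :=
      (1/2 : ℝ) • Matrix.diagonal
        (fun i : Fin n => if (i : ℕ) = 0 then 1 else if (i : ℕ) = 1 then -1 else 0)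
    let k₂ : Matrix (Fin n) (Fin n) ℝ :=
      (1/2 : ℝ) • (Matrix.single ⟨0, by omega⟩ ⟨1, by omega⟩ (1 : ℝ) +
        Matrix.single ⟨1, by omega⟩ ⟨0, by omega⟩ (1 : ℝ))
    h + k₁ ≠ 0 →
    ∃ B : LieSubalgebra ℝ (Matrix (Fin n) (Fin n) ℝ),
      (B : Set (Matrix (Fin n) (Fin n) ℝ)) =
        (Submodule.span ℝ ({h, k₁, k₂, ⁅k₁, k₂⁆} : Set (Matrix (Fin n) (Fin n) ℝ)) :
          Set (Matrix (Fin n) (Fin n) ℝ)) ∧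
      (∀ x ∈ B, Matrix.trace x = 0) ∧
      Module.finrank ℝ B = 4 ∧
      Nonempty (B ≃ₗ⁅ℝ⁆ Matrix (Fin 2) (Fin 2) ℝ) := by
  intro h k₁ k₂ hne
  set i0 : Fin n := ⟨0, by omega⟩ with hi0
  set i1 : Fin n := ⟨1, by omega⟩ with hi1
  have hne01 : i0 ≠ i1 := by simp [hi0, hi1, Fin.ext_iff]
  have hne10 : i1 ≠ i0 := hne01.symm
  set e01 : Matrix (Fin n) (Fin n) ℝ := Matrix.single i0 i1 (1:ℝ) with he01
  set e10 : Matrix (Fin n) (Fin n) ℝ := Matrix.single i1 i0 (1:ℝ) with he10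
  set E00 : Matrix (Fin n) (Fin n) ℝ := Matrix.single i0 i0 (1:ℝ) with hE00
  set E11 : Matrix (Fin n) (Fin n) ℝ := Matrix.single i1 i1 (1:ℝ) with hE11
  have hh : h = Matrix.diagonal a := rfl
  have hk2 : k₂ = (1/2 : ℝ) • (e01 + e10) := rfl
  -- the diagonal part of k₁ as a combination of matrix units
  have hdf : Matrix.diagonal
      (fun i : Fin n => if (i : ℕ) = 0 then (1:ℝ) else if (i : ℕ) = 1 then -1 else 0)
      = E00 - E11 := by
    have hv0 : ((i0 : Fin n) : ℕ) = 0 := rfl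
    have hv1 : ((i1 : Fin n) : ℕ) = 1 := rfl
    ext x y
    rcases eq_or_ne x y with rfl | hxy
    · rw [Matrix.diagonal_apply_eq, Matrix.sub_apply]
      by_cases h0 : x = i0
      · subst h0
        simp [hE00, hE11, hv0, hne10]
      · by_cases h1 : x = i1
        · subst h1
          simp [hE00, hE11, hv1, hne01]
        · have h0' : (x:ℕ) ≠ 0 := fun hx => h0 (by rw [hi0]; exact Fin.ext hx)
          have h1' : (x:ℕ) ≠ 1 := fun hx => h1 (by rw [hi1]; exact Fin.ext hx)
          simp [hE00, hE11, h0', h1', Ne.symm h0, Ne.symm h1]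
    · rw [Matrix.diagonal_apply_ne _ hxy, Matrix.sub_apply, hE00, hE11,
        stdDiagOff _ _ _ _ hxy, stdDiagOff _ _ _ _ hxy]
      norm_num
  have hk1 : k₁ = (1/2 : ℝ) • (E00 - E11) := by
    show (1/2 : ℝ) • Matrix.diagonal _ = _
    rw [hdf]
  -- atomic bracket relations
  have q1 : ⁅h, e01⁆ = -e01 := by
    rw [hh, he01, lieDiagStd, show ((a i0 - a i1) * 1 : ℝ) = -1 by rw [ha]; ring, stdSmul]
    module
  have q2 : ⁅h, e10⁆ = e10 := by
    rw [hh, he10, lieDiagStd, show ((a i1 - a i0) * 1 : ℝ) = 1 by rw [ha]; ring]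
  have q3 : ⁅h, E00⁆ = 0 := by
    rw [hh, hE00, lieDiagStd, show ((a i0 - a i0) * 1 : ℝ) = 0 by ring,
      Matrix.single_zero]
  have q4 : ⁅h, E11⁆ = 0 := by
    rw [hh, hE11, lieDiagStd, show ((a i1 - a i1) * 1 : ℝ) = 0 by ring,
      Matrix.single_zero]
  have q5 : ⁅e01, e10⁆ = E00 - E11 := by
    rw [he01, he10, hE00, hE11, Ring.lie_def, Matrix.single_mul_single_same,
      Matrix.single_mul_single_same, mul_one]
  have q6 : ⁅E00, e01⁆ = e01 := by
    rw [hE00, he01, Ring.lie_def, Matrix.single_mul_single_same,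
      Matrix.single_mul_single_of_ne (h := hne10), mul_one, sub_zero]
  have q7 : ⁅E00, e10⁆ = -e10 := by
    rw [hE00, he10, Ring.lie_def, Matrix.single_mul_single_same,
      Matrix.single_mul_single_of_ne (h := hne01), mul_one, zero_sub]
  have q8 : ⁅E11, e01⁆ = -e01 := by
    rw [hE11, he01, Ring.lie_def, Matrix.single_mul_single_same,
      Matrix.single_mul_single_of_ne (h := hne10), mul_one, zero_sub]
  have q9 : ⁅E11, e10⁆ = e10 := by
    rw [hE11, he10, Ring.lie_def, Matrix.single_mul_single_same,
      Matrix.single_mul_single_of_ne (h := hne01), mul_one, sub_zero]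
  have q10 : ⁅E00, E11⁆ = 0 := by
    rw [hE00, hE11, Ring.lie_def, Matrix.single_mul_single_of_ne (h := hne01),
      Matrix.single_mul_single_of_ne (h := hne10), sub_zero]
  -- reversed versions
  have q1' : ⁅e01, h⁆ = e01 := by rw [← lie_skew, q1, neg_neg]
  have q2' : ⁅e10, h⁆ = -e10 := by rw [← lie_skew, q2]
  have q3' : ⁅E00, h⁆ = 0 := by rw [← lie_skew, q3, neg_zero]
  have q4' : ⁅E11, h⁆ = 0 := by rw [← lie_skew, q4, neg_zero]
  have q5' : ⁅e10, e01⁆ = E11 - E00 := by rw [← lie_skew, q5]; module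
  have q6' : ⁅e01, E00⁆ = -e01 := by rw [← lie_skew, q6]
  have q7' : ⁅e10, E00⁆ = e10 := by rw [← lie_skew, q7, neg_neg]
  have q8' : ⁅e01, E11⁆ = e01 := by rw [← lie_skew, q8, neg_neg]
  have q9' : ⁅e10, E11⁆ = -e10 := by rw [← lie_skew, q9]
  have q10' : ⁅E11, E00⁆ = 0 := by rw [← lie_skew, q10, neg_zero]
  have T1 : ⁅k₁, k₂⁆ = (1/2 : ℝ) • (e01 - e10) := by
    rw [hk1, hk2]
    simp only [smul_lie, lie_smul, lie_add, add_lie, lie_sub, sub_lie, lie_self,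
      q6, q7, q8, q9]
    module
  -- the Lie algebra morphism from gl₂
  let φ : Matrix (Fin 2) (Fin 2) ℝ →ₗ⁅ℝ⁆ Matrix (Fin n) (Fin n) ℝ :=
    { toFun := fun X => ((X 0 0 + X 1 1)/2) • (h + k₁) + (X 0 0 - X 1 1) • k₁
        + (X 0 1 + X 1 0) • k₂ + (X 0 1 - X 1 0) • ((1/2 : ℝ) • (e01 - e10))
      map_add' := by
        intro X Y
        simp only [Matrix.add_apply]
        module
      map_smul' := by
        intro c X
        simp only [Matrix.smul_apply, smul_eq_mul, RingHom.id_apply]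
        module
      map_lie' := by
        intro X Y
        rw [hk1, hk2]
        simp only [add_lie, lie_add, sub_lie, lie_sub, smul_lie, lie_smul, lie_self,
          q1, q2, q3, q4, q5, q6, q7, q8, q9, q10,
          q1', q2', q3', q4', q5', q6', q7', q8', q9', q10']
        simp only [Ring.lie_def, Matrix.sub_apply, Matrix.mul_apply, Fin.sum_univ_two]
        module }
  have hφ : ∀ X : Matrix (Fin 2) (Fin 2) ℝ,
      φ X = ((X 0 0 + X 1 1)/2) • (h + k₁) + (X 0 0 - X 1 1) • k₁
        + (X 0 1 + X 1 0) • k₂ + (X 0 1 - X 1 0) • ((1/2 : ℝ) • (e01 - e10)) :=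
    fun _ => rfl
  -- injectivity
  have hker : ∀ X : Matrix (Fin 2) (Fin 2) ℝ, φ X = 0 → X = 0 := by
    intro X hX
    have hX0 := hX
    rw [hφ X, hh, hk1, hk2] at hX
    have h01 := congrFun (congrFun hX i0) i1
    have h10 := congrFun (congrFun hX i1) i0
    have h00 := congrFun (congrFun hX i0) i0
    have h11 := congrFun (congrFun hX i1) i1
    rw [he01, he10, hE00, hE11] at h01 h10 h00 h11
    simp only [Matrix.add_apply, Matrix.smul_apply, Matrix.sub_apply, Matrix.zero_apply,
      smul_eq_mul, Matrix.diagonal_apply_eq, Matrix.diagonal_apply_ne _ hne01,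
      Matrix.diagonal_apply_ne _ hne10, Matrix.single_apply_same,
      Matrix.single_apply_of_row_ne hne01, Matrix.single_apply_of_row_ne hne10,
      Matrix.single_apply_of_col_ne _ _ hne01, Matrix.single_apply_of_col_ne _ _ hne10]
      at h01 h10 h00 h11
    rw [ha] at h11
    have e1 : X 0 1 = 0 := by linarith
    have e2 : X 1 0 = 0 := by linarith
    have e3 : X 0 0 - X 1 1 = 0 := by nlinarith [h00, h11]
    have e4 : ((X 0 0 + X 1 1)/2) • (h + k₁) = 0 := by
      have h5 : φ X = ((X 0 0 + X 1 1)/2) • (h + k₁) := by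
        rw [hφ X, e1, e2, e3]
        simp
      rw [← h5, hX0]
    rcases smul_eq_zero.mp e4 with ht | hz
    · have e5 : X 0 0 = 0 := by linarith
      have e6 : X 1 1 = 0 := by linarith
      ext i j
      fin_cases i <;> fin_cases j <;> simp only [Matrix.zero_apply] <;>
        first | exact e5 | exact e1 | exact e2 | exact e6
    · exact absurd hz hne
  have hinj : Function.Injective φ := by
    intro X Y hXY
    have : X - Y = 0 := hker _ (by rw [map_sub, hXY, sub_self])
    exact sub_eq_zero.mp this
  refine ⟨φ.range, ?_, ?_, ?_, ⟨(LieEquiv.ofInjective φ hinj).symm⟩⟩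
  · -- the range is the given span
    apply Set.Subset.antisymm
    · rintro x hx
      rw [SetLike.mem_coe, LieHom.mem_range] at hx
      obtain ⟨X, rfl⟩ := hx
      rw [SetLike.mem_coe]
      have hrepr : φ X = ((X 0 0 + X 1 1)/2) • h
          + ((X 0 0 + X 1 1)/2 + (X 0 0 - X 1 1)) • k₁
          + (X 0 1 + X 1 0) • k₂ + (X 0 1 - X 1 0) • ⁅k₁, k₂⁆ := by
        rw [hφ X, T1]
        module
      rw [hrepr]
      refine Submodule.add_mem _ (Submodule.add_mem _ (Submodule.add_mem _
        (Submodule.smul_mem _ _ ?_) (Submodule.smul_mem _ _ ?_))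
        (Submodule.smul_mem _ _ ?_)) (Submodule.smul_mem _ _ ?_) <;>
        apply Submodule.subset_span <;> simp
    · intro x hx
      rw [SetLike.mem_coe] at hx ⊢
      rw [← LieSubalgebra.mem_toSubmodule]
      refine Submodule.span_le.mpr ?_ hx
      rintro y hy
      rw [SetLike.mem_coe, LieSubalgebra.mem_toSubmodule, LieHom.mem_range]
      simp only [Set.mem_insert_iff, Set.mem_singleton_iff] at hy
      rcases hy with rfl | rfl | rfl | rfl
      · refine ⟨!![(1/2 : ℝ), 0; 0, (3/2 : ℝ)], ?_⟩
        rw [hφ]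
        norm_num [Matrix.cons_val_zero, Matrix.cons_val_one, Matrix.head_cons]
      · refine ⟨!![(1/2 : ℝ), 0; 0, (-(1/2) : ℝ)], ?_⟩
        rw [hφ]
        norm_num [Matrix.cons_val_zero, Matrix.cons_val_one, Matrix.head_cons]
      · refine ⟨!![(0 : ℝ), (1/2 : ℝ); (1/2 : ℝ), 0], ?_⟩
        rw [hφ]
        norm_num [Matrix.cons_val_zero, Matrix.cons_val_one, Matrix.head_cons]
      · refine ⟨!![(0 : ℝ), (1/2 : ℝ); (-(1/2) : ℝ), 0], ?_⟩
        rw [hφ, T1]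
        norm_num [Matrix.cons_val_zero, Matrix.cons_val_one, Matrix.head_cons]
  · -- traces vanish
    intro x hx
    rw [LieHom.mem_range] at hx
    obtain ⟨X, rfl⟩ := hx
    rw [hφ X, hh, hk1, hk2, he01, he10, hE00, hE11]
    simp [Matrix.trace_add, Matrix.trace_smul, Matrix.trace_sub, Matrix.trace_diagonal,
      hsum, Matrix.trace_single_eq_of_ne _ _ _ hne01,
      Matrix.trace_single_eq_of_ne _ _ _ hne10, Matrix.trace_single_eq_same]
  · -- the dimension is 4
    have h4 : Module.finrank ℝ (Matrix (Fin 2) (Fin 2) ℝ) = 4 := by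
      simp [Module.finrank_matrix]
    rw [← h4]
    exact (LinearEquiv.finrank_eq (LieEquiv.ofInjective φ hinj).toLinearEquiv).symm
end
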